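/- Let A be a finite alphabet, let w₁, w₂ ∈ A* with |w₁| = |w₂|, let k ∈ ℕ with k > h(w₁, w₂), let a, b ∈ A with a ≠ b, and let θ ∈ (0, 2]. Then lev_θ(st(w₁, aᵏbaᵏ), st(w₂, aᵏbaᵏ)) = θ · h(w₁, w₂); that is, the cheapest edit sequence between the two stretched words uses only substitutions, one for each position where w₁ and w₂ differ. -/

import Mathlib

/-- A cost structure for edit distance (ported verbatim from the Mathlib of December 2024,
`Mathlib/Data/List/EditDistance/Defs.lean`, since removed from Mathlib). -/
structure Levenshtein.Cost (α β δ : Type*) where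
  /-- Cost to delete an element from a list. -/
  delete : α → δ
  /-- Cost in insert an element into a list. -/
  insert : β → δ
  /-- Cost to substitute one element for another in a list. -/
  substitute : α → β → δ

/-- (Internal implementation detail of `suffixLevenshtein`, ported from older Mathlib.) -/
def Levenshtein.impl {α β δ : Type*} [AddZeroClass δ] [Min δ]
    (C : Levenshtein.Cost α β δ) (xs : List α) (y : β) (d : {r : List δ // 0 < r.length}) :
    {r : List δ // 0 < r.length} :=
  let ⟨ds, w⟩ := d
  xs.zip (ds.zip ds.tail) |>.foldr
    (init := ⟨[C.insert y + ds.getLast (List.length_pos_iff.mp w)], by simp⟩)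
    (fun ⟨x, d₀, d₁⟩ ⟨r, w⟩ =>
      ⟨min (C.delete x + r[0]) (min (C.insert y + d₀) (C.substitute x y + d₁)) :: r, by simp⟩)

/-- `suffixLevenshtein C xs ys` computes the Levenshtein distance
(using the cost functions provided by a `C : Cost α β δ`)
from each suffix of the list `xs` to the list `ys` (ported from older Mathlib). -/
def suffixLevenshtein {α β δ : Type*} [AddZeroClass δ] [Min δ]
    (C : Levenshtein.Cost α β δ) (xs : List α) (ys : List β) :
    {r : List δ // 0 < r.length} :=
  ys.foldr
    (Levenshtein.impl C xs)
    (xs.foldr (init := ⟨[0], by simp⟩) (fun a ⟨r, w⟩ => ⟨(C.delete a + r[0]) :: r, by simp⟩))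

/-- `levenshtein C xs ys` computes the Levenshtein distance
(using the cost functions provided by a `C : Cost α β δ`)
from the list `xs` to the list `ys` (ported from older Mathlib). -/
def levenshtein {α β δ : Type*} [AddZeroClass δ] [Min δ]
    (C : Levenshtein.Cost α β δ) (xs : List α) (ys : List β) : δ :=
  let ⟨r, w⟩ := suffixLevenshtein C xs ys
  r[0]

/-- Cost structure for the generalized Levenshtein distance:
insertions and deletions cost `γ`, substitutions cost `θ`. -/
def levCost (A : Type*) [DecidableEq A] (γ θ : ℝ) : Levenshtein.Cost A A ℝ where
  delete _ := γ
  insert _ := γ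
  substitute a b := if a = b then 0 else θ

/-- The generalized Levenshtein distance `lev_{γ,θ}` between two words over `A`:
the minimal total cost of transforming one word into the other by insertions and
deletions (of cost `γ`) and substitutions (of cost `θ`). -/
def lev {A : Type*} [DecidableEq A] (γ θ : ℝ) (u v : List A) : ℝ :=
  levenshtein (levCost A γ θ) u v

/-- The isometry group of a language `L ⊆ A*` with respect to a distance `d` on `A*`:
the group (under composition) of bijections of `L` preserving `d`. -/
def IsomGroup {A : Type*} (d : List A → List A → ℝ) (L : Set (List A)) :
    Subgroup (Equiv.Perm L) where
  carrier := {φ : Equiv.Perm L | ∀ u v : L, d (φ u) (φ v) = d u v}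
  one_mem' := by intro u v; rfl
  mul_mem' := by intro φ ψ hφ hψ u v; simp only [Equiv.Perm.mul_apply]; rw [hφ, hψ]
  inv_mem' := by
    intro φ hφ u v
    have h := hφ (φ⁻¹ u) (φ⁻¹ v)
    simpa using h.symm

/-- The Hamming distance between two words (of equal length): the number of positions at
which they differ. -/
def hammingDistL {A : Type*} [DecidableEq A] (u v : List A) : ℕ :=
  (u.zip v).countP fun p => decide (p.1 ≠ p.2)


/-- Word stretching: `st(Λ, w₂) = Λ` and `st(w₁·a, w₂) = st(w₁, w₂)·w₂·a`. -/
def st {A : Type*} (w₁ w₂ : List A) : List A :=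
  w₁.foldl (fun acc a => acc ++ w₂ ++ [a]) []


/-!
Substituting at the `h = h(w₁, w₂)` positions where the words differ gives the upper bound.

For the lower bound, when `θ ≤ 2γ` an edit script of cost `c` from `u` to `v` leaves a common
subsequence `m` with `θ (|u| + |v| - 2|m|) ≤ 2c`; so it suffices that a common subsequence of the
two stretched words, of length `N` each, has length at most `N - h`. If it were longer, every
matched pair of positions would be shifted by less than `h < k`. Letters other than `a` occur in
a stretched word only at positions `≡ k (mod k + 1)`, so a matched pair of such letters sits at
one and the same position. Cutting the matching at the separators `b` matched to themselves, a
stretch of `g` blocks between two cuts loses its `g - 1` inner separators, and counting the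
matched `a`'s and the letters equal at the same index shows it loses at least as many positions
as the words differ in there.
-/

section Levenshtein

variable {α β δ : Type*} [AddZeroClass δ] [Min δ] (C : Levenshtein.Cost α β δ)

theorem Levenshtein.impl_tail (x : α) (xs : List α) (y : β) (d e : {r : List δ // 0 < r.length})
    (h : d.1.tail = e.1) :
    (Levenshtein.impl C (x :: xs) y d).1.tail = (Levenshtein.impl C xs y e).1 := by
  obtain ⟨_ | ⟨d₀, ds⟩, hd⟩ := d
  · simp at hd
  obtain ⟨_ | ⟨e₀, es⟩, he⟩ := e
  · simp at he
  obtain rfl : ds = e₀ :: es := h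
  rfl

theorem suffixLevenshtein_cons_left (x : α) (xs : List α) (ys : List β) :
    (suffixLevenshtein C (x :: xs) ys).1 =
      levenshtein C (x :: xs) ys :: (suffixLevenshtein C xs ys).1 := by
  have htail : (suffixLevenshtein C (x :: xs) ys).1.tail = (suffixLevenshtein C xs ys).1 := by
    induction ys with
    | nil => rfl
    | cons y ys ih => exact Levenshtein.impl_tail C x xs y _ _ ih
  rw [← htail]
  unfold levenshtein
  generalize suffixLevenshtein C (x :: xs) ys = S
  obtain ⟨_ | ⟨d, ds⟩, hd⟩ := S
  · simp at hd
  rfl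

theorem suffixLevenshtein_nil_left (ys : List β) :
    (suffixLevenshtein C [] ys).1 = [levenshtein C [] ys] := by
  cases ys <;> rfl

@[simp]
theorem levenshtein_nil_nil : levenshtein C [] [] = 0 := rfl

@[simp]
theorem levenshtein_nil_cons (y : β) (ys : List β) :
    levenshtein C [] (y :: ys) = C.insert y + levenshtein C [] ys := by
  show C.insert y + (suffixLevenshtein C [] ys).1.getLast _ = _
  simp [suffixLevenshtein_nil_left]

@[simp]
theorem levenshtein_cons_nil (x : α) (xs : List α) :
    levenshtein C (x :: xs) [] = C.delete x + levenshtein C xs [] :=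
  rfl

theorem levenshtein_cons_cons (x : α) (xs : List α) (y : β) (ys : List β) :
    levenshtein C (x :: xs) (y :: ys) =
      min (C.delete x + levenshtein C xs (y :: ys))
        (min (C.insert y + levenshtein C (x :: xs) ys)
          (C.substitute x y + levenshtein C xs ys)) := by
  have h := suffixLevenshtein_cons_left C x xs ys
  have hright : ∀ zs : List α, suffixLevenshtein C zs (y :: ys) =
      Levenshtein.impl C zs y (suffixLevenshtein C zs ys) := fun _ => rfl
  unfold levenshtein at h ⊢
  rw [hright, hright]
  generalize suffixLevenshtein C (x :: xs) ys = S at h ⊢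
  generalize suffixLevenshtein C xs ys = T at h ⊢
  obtain ⟨_ | ⟨s, ss⟩, hS⟩ := S
  · simp at hS
  obtain ⟨_ | ⟨t, ts⟩, hT⟩ := T
  · simp at hT
  obtain rfl : ss = t :: ts := (List.cons_eq_cons.mp h).2
  rfl

end Levenshtein

section Hamming

variable {A : Type*} [DecidableEq A]

theorem hammingDistL_cons (x y : A) (u v : List A) :
    hammingDistL (x :: u) (y :: v) = hammingDistL u v + if x = y then 0 else 1 := by
  by_cases h : x = y <;> simp [hammingDistL, h]

theorem hammingDistL_append {u₁ v₁ : List A} (h : u₁.length = v₁.length) (u₂ v₂ : List A) :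
    hammingDistL (u₁ ++ u₂) (v₁ ++ v₂) = hammingDistL u₁ v₁ + hammingDistL u₂ v₂ := by
  rw [hammingDistL, List.zip_append h, List.countP_append]
  rfl

theorem hammingDistL_self (u : List A) : hammingDistL u u = 0 := by
  induction u with
  | nil => rfl
  | cons x u ih => simpa [hammingDistL_cons] using ih

theorem countP_zip_add_hammingDistL_add_min_count_le (a : A) {cs cs' : List A}
    (hlen : cs.length = cs'.length) (hcs : cs ≠ []) :
    (cs.zip cs').countP (fun q => q.1 = q.2 ∧ q.1 ≠ a) + hammingDistL cs cs' +
      min (cs.count a) (cs'.count a) + 1 ≤ 2 * cs.length := by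
  have key : ∀ cs' : List A, cs.length = cs'.length →
      (cs.zip cs').countP (fun q => q.1 = q.2 ∧ q.1 ≠ a) + hammingDistL cs cs' + cs.count a =
        cs.length + (cs.zip cs').countP (fun q => q.1 = a ∧ q.2 ≠ a) ∧
      (cs.zip cs').countP (fun q => q.1 = q.2 ∧ q.1 ≠ a) + hammingDistL cs cs' + cs'.count a =
        cs.length + (cs.zip cs').countP (fun q => q.2 = a ∧ q.1 ≠ a) ∧
      (cs.zip cs').countP (fun q => q.1 = a ∧ q.2 ≠ a) +
        (cs.zip cs').countP (fun q => q.2 = a ∧ q.1 ≠ a) ≤ cs.length := by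
    clear hcs hlen cs'
    induction cs with
    | nil =>
      intro cs' h
      obtain rfl : cs' = [] := List.length_eq_zero_iff.mp h.symm
      simp [hammingDistL]
    | cons c cs ih =>
      rintro (_ | ⟨c', cs'⟩) h
      · simp at h
      have := ih cs' (Nat.succ.inj h)
      simp only [List.zip_cons_cons, List.countP_cons, List.count_cons, hammingDistL_cons,
        List.length_cons]
      rcases eq_or_ne c a with rfl | h1 <;> rcases eq_or_ne c' c with rfl | h2
      · simp at this ⊢; omega
      · simp [h2, Ne.symm h2] at this ⊢; omega
      · simp [h1] at this ⊢; omega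
      · by_cases h3 : c' = a
        · subst h3; simp [h1] at this ⊢; omega
        · simp [h1, Ne.symm h2, h3] at this ⊢; omega
  obtain ⟨h₁, h₂, h₃⟩ := key cs' hlen
  have := List.length_pos_iff.mpr hcs
  omega

end Hamming

section Stretch

variable {A : Type*}

theorem st_cons (c : A) (w B : List A) : st (c :: w) B = B ++ c :: st w B := by
  simp [st]

theorem length_st (w B : List A) : (st w B).length = w.length * (B.length + 1) := by
  induction w with
  | nil => simp [st]
  | cons c w ih => rw [st_cons]; simp [ih]; ring

theorem hammingDistL_st [DecidableEq A] {w₁ w₂ : List A} (h : w₁.length = w₂.length)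
    (B : List A) : hammingDistL (st w₁ B) (st w₂ B) = hammingDistL w₁ w₂ := by
  induction w₁ generalizing w₂ with
  | nil => obtain rfl : w₂ = [] := List.length_eq_zero_iff.mp h.symm; rfl
  | cons c w₁ ih =>
    obtain _ | ⟨c', w₂⟩ := w₂
    · simp at h
    rw [st_cons, st_cons, hammingDistL_append rfl, hammingDistL_self, hammingDistL_cons,
      hammingDistL_cons, ih (Nat.succ.inj h), zero_add]

end Stretch

section Lev

variable {A : Type*} [DecidableEq A] (γ θ : ℝ)

theorem lev_nil_left (v : List A) : lev γ θ [] v = γ * v.length := by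
  induction v with
  | nil => simp [lev]
  | cons y v ih =>
    simp only [lev, levenshtein_nil_cons, List.length_cons] at ih ⊢
    rw [ih]; simp [levCost]; ring

theorem lev_nil_right (u : List A) : lev γ θ u [] = γ * u.length := by
  induction u with
  | nil => simp [lev]
  | cons x u ih =>
    simp only [lev, levenshtein_cons_nil, List.length_cons] at ih ⊢
    rw [ih]; simp [levCost]; ring

theorem lev_cons_cons (x y : A) (u v : List A) :
    lev γ θ (x :: u) (y :: v) =
      min (γ + lev γ θ u (y :: v))
        (min (γ + lev γ θ (x :: u) v) ((if x = y then 0 else θ) + lev γ θ u v)) :=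
  levenshtein_cons_cons _ x u y v

theorem lev_le_mul_hammingDistL {u v : List A} (h : u.length = v.length) :
    lev γ θ u v ≤ θ * hammingDistL u v := by
  induction u generalizing v with
  | nil =>
    obtain rfl : v = [] := List.length_eq_zero_iff.mp h.symm
    simp [lev, hammingDistL]
  | cons x u ih =>
    obtain _ | ⟨y, v⟩ := v
    · simp at h
    have ih := ih (Nat.succ.inj h)
    rw [lev_cons_cons, hammingDistL_cons]
    refine (min_le_right _ _).trans ((min_le_right _ _).trans ?_)
    split_ifs <;> push_cast <;> linarith

theorem exists_sublist_mul_le_lev (hθ : θ ≤ 2 * γ) (u v : List A) :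
    ∃ m : List A, m.Sublist u ∧ m.Sublist v ∧
      θ * (u.length + v.length) ≤ 2 * lev γ θ u v + 2 * θ * m.length := by
  induction u generalizing v with
  | nil =>
    refine ⟨[], .slnil, List.nil_sublist v, ?_⟩
    have : (0 : ℝ) ≤ v.length := v.length.cast_nonneg
    rw [lev_nil_left]; simp; nlinarith
  | cons x u ihu =>
    induction v with
    | nil =>
      refine ⟨[], List.nil_sublist _, .slnil, ?_⟩
      have : (0 : ℝ) ≤ (x :: u).length := Nat.cast_nonneg _
      rw [lev_nil_right]; simp only [List.length_nil, Nat.cast_zero]; nlinarith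
    | cons y v ihv =>
      rw [lev_cons_cons]
      rcases min_choice (γ + lev γ θ u (y :: v))
          (min (γ + lev γ θ (x :: u) v) ((if x = y then 0 else θ) + lev γ θ u v)) with h | h <;>
        rw [h]
      · obtain ⟨m, hu, hv, hm⟩ := ihu (y :: v)
        refine ⟨m, hu.cons x, hv, ?_⟩
        simp only [List.length_cons, Nat.cast_succ] at hm ⊢; linarith
      rcases min_choice (γ + lev γ θ (x :: u) v) ((if x = y then 0 else θ) + lev γ θ u v) with
        h | h <;> rw [h]
      · obtain ⟨m, hu, hv, hm⟩ := ihv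
        refine ⟨m, hu, hv.cons y, ?_⟩
        simp only [List.length_cons, Nat.cast_succ] at hm ⊢; linarith
      obtain ⟨m, hu, hv, hm⟩ := ihu v
      split_ifs with hxy
      · subst hxy
        refine ⟨x :: m, hu.cons_cons x, hv.cons_cons x, ?_⟩
        simp only [List.length_cons, Nat.cast_succ] at hm ⊢; linarith
      · refine ⟨m, hu.cons x, hv.cons y, ?_⟩
        simp only [List.length_cons, Nat.cast_succ] at hm ⊢; linarith

end Lev

theorem List.Nodup.length_le_sub {l : List ℕ} (hl : l.Nodup) {lo hi : ℕ}
    (h : ∀ i ∈ l, lo ≤ i ∧ i < hi) : l.length ≤ hi - lo := by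
  rw [← List.toFinset_card_of_nodup hl, ← Nat.card_Ico lo hi]
  exact Finset.card_le_card fun i hi => by simpa using h i (List.mem_toFinset.mp hi)

theorem List.Nodup.length_le_countP {α : Type*} {l : List ℕ} (hl : l.Nodup) {w : List α}
    {p : α → Bool} (h : ∀ i ∈ l, ∃ x, w[i]? = some x ∧ p x) : l.length ≤ w.countP p := by
  have hsub : l ⊆ (w.zipIdx.filter (p ·.1)).map (·.2) := fun i hi => by
    obtain ⟨x, hx, hpx⟩ := h i hi
    exact List.mem_map.mpr
      ⟨(x, i), List.mem_filter.mpr ⟨List.mem_zipIdx_iff_getElem?.mpr hx, hpx⟩, rfl⟩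
  refine (List.subperm_of_subset hl hsub).length_le.trans_eq ?_
  rw [List.length_map, ← List.countP_eq_length_filter]
  conv_rhs => rw [← List.zipIdx_map_fst 0 w, List.countP_map]
  rfl

section Matching

variable {α : Type*}

def IsMatching (u v : List α) (P : List (ℕ × ℕ)) : Prop :=
  P.Pairwise (fun p q => p.1 < q.1 ∧ p.2 < q.2) ∧ ∀ p ∈ P, ∃ x, u[p.1]? = some x ∧ v[p.2]? = some x

variable {u v : List α} {P : List (ℕ × ℕ)}

theorem IsMatching.nodup_map_fst (hP : IsMatching u v P) : (P.map Prod.fst).Nodup :=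
  List.pairwise_map.mpr (hP.1.imp fun h => h.1.ne)

theorem IsMatching.nodup_map_snd (hP : IsMatching u v P) : (P.map Prod.snd).Nodup :=
  List.pairwise_map.mpr (hP.1.imp fun h => h.2.ne)

theorem IsMatching.fst_lt_length (hP : IsMatching u v P) {p : ℕ × ℕ} (hp : p ∈ P) :
    p.1 < u.length := by
  obtain ⟨x, hx, -⟩ := hP.2 p hp
  exact (List.getElem?_eq_some_iff.mp hx).1

theorem IsMatching.fst_lt_iff_snd_lt (hP : IsMatching u v P) {p q : ℕ × ℕ} (hp : p ∈ P)
    (hq : q ∈ P) : p.1 < q.1 ↔ p.2 < q.2 := by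
  refine List.Pairwise.forall_of_forall_of_flip (R := fun p q : ℕ × ℕ => p.1 < q.1 ↔ p.2 < q.2)
    (fun _ _ => iff_of_false (lt_irrefl _) (lt_irrefl _)) ?_ ?_ hp hq
  · exact hP.1.imp fun h => iff_of_true h.1 h.2
  · exact hP.1.imp fun h => iff_of_false h.1.asymm h.2.asymm

theorem IsMatching.fst_le_snd_add (hP : IsMatching u v P) {p : ℕ × ℕ} (hp : p ∈ P) :
    p.1 ≤ p.2 + (u.length - P.length) := by
  have hsplit := List.length_eq_length_filter_add (l := P) (fun q => decide (q.1 < p.1))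
  have hbefore : (P.filter fun q => decide (q.1 < p.1)).length ≤ p.2 := by
    rw [← List.length_map (f := Prod.snd)]
    refine (List.Nodup.length_le_sub (lo := 0)
      (hP.nodup_map_snd.sublist (List.filter_sublist.map _)) ?_).trans_eq p.2.sub_zero
    simp only [List.mem_map, List.mem_filter, decide_eq_true_eq]
    rintro _ ⟨q, ⟨hq, hqp⟩, rfl⟩
    exact ⟨Nat.zero_le _, (hP.fst_lt_iff_snd_lt hq hp).mp hqp⟩
  have hafter : (P.filter fun q => !decide (q.1 < p.1)).length ≤ u.length - p.1 := by
    rw [← List.length_map (f := Prod.fst)]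
    refine List.Nodup.length_le_sub (hP.nodup_map_fst.sublist (List.filter_sublist.map _)) ?_
    simp only [List.mem_map, List.mem_filter, Bool.not_eq_true', decide_eq_false_iff_not, not_lt]
    rintro _ ⟨q, ⟨hq, hqp⟩, rfl⟩
    exact ⟨hqp, hP.fst_lt_length hq⟩
  have := hP.fst_lt_length hp
  omega

theorem IsMatching.symm (hP : IsMatching u v P) : IsMatching v u (P.map Prod.swap) :=
  ⟨List.pairwise_map.mpr (hP.1.imp fun h => ⟨h.2, h.1⟩), by
    simp only [List.mem_map]
    rintro _ ⟨p, hp, rfl⟩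
    obtain ⟨x, hu, hv⟩ := hP.2 p hp
    exact ⟨x, hv, hu⟩⟩

theorem IsMatching.snd_le_fst_add (hP : IsMatching u v P) {p : ℕ × ℕ} (hp : p ∈ P) :
    p.2 ≤ p.1 + (v.length - P.length) := by
  simpa using hP.symm.fst_le_snd_add (List.mem_map_of_mem (f := Prod.swap) hp)

theorem List.Sublist.exists_isMatching {m : List α} (hu : m.Sublist u) (hv : m.Sublist v) :
    ∃ P, IsMatching u v P ∧ P.length = m.length := by
  obtain ⟨f, hf⟩ := List.sublist_iff_exists_fin_orderEmbedding_get_eq.mp hu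
  obtain ⟨g, hg⟩ := List.sublist_iff_exists_fin_orderEmbedding_get_eq.mp hv
  refine ⟨(List.finRange m.length).map fun t => ((f t : ℕ), (g t : ℕ)), ⟨?_, ?_⟩, by simp⟩
  · exact List.pairwise_map.mpr ((List.pairwise_lt_finRange _).imp fun h =>
      ⟨f.strictMono h, g.strictMono h⟩)
  · simp only [List.mem_map, List.mem_finRange, true_and]
    rintro _ ⟨t, rfl⟩
    refine ⟨m.get t, ?_, ?_⟩
    · rw [hf t]; simp
    · rw [hg t]; simp

theorem IsMatching.split {u₁ u₂ v₁ v₂ : List α} (hP : IsMatching (u₁ ++ u₂) (v₁ ++ v₂) P)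
    (hcut : ∀ p ∈ P, p.1 < u₁.length ↔ p.2 < v₁.length) :
    IsMatching u₁ v₁ (P.filter fun p => p.1 < u₁.length) ∧
      IsMatching u₂ v₂ ((P.filter fun p => ¬ p.1 < u₁.length).map
        fun p => (p.1 - u₁.length, p.2 - v₁.length)) := by
  refine ⟨⟨hP.1.sublist List.filter_sublist, ?_⟩, ⟨?_, ?_⟩⟩
  · intro p hp
    simp only [List.mem_filter, decide_eq_true_eq] at hp
    obtain ⟨x, hu, hv⟩ := hP.2 p hp.1
    rw [List.getElem?_append_left hp.2] at hu
    rw [List.getElem?_append_left ((hcut p hp.1).mp hp.2)] at hv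
    exact ⟨x, hu, hv⟩
  · refine List.pairwise_map.mpr ((hP.1.sublist List.filter_sublist).imp_of_mem ?_)
    intro p q hp hq h
    simp only [List.mem_filter, decide_eq_true_eq] at hp hq
    have := hcut p hp.1; have := hcut q hq.1
    omega
  · simp only [List.mem_map, List.mem_filter, decide_eq_true_eq]
    rintro _ ⟨p, ⟨hp, hpc⟩, rfl⟩
    obtain ⟨x, hu, hv⟩ := hP.2 p hp
    rw [List.getElem?_append_right (not_lt.mp hpc)] at hu
    rw [List.getElem?_append_right (not_lt.mp ((hcut p hp).not.mp hpc))] at hv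
    exact ⟨x, hu, hv⟩

end Matching

section BlockWord

variable {A : Type*} (k : ℕ) (a b : A)

/-- The stretched word `st(w, aᵏbaᵏ)`, padded as in `blockWord_cons_eq_st` so that it falls into
blocks of length `2k + 2` and splits along every splitting of `cs`. -/
def blockWord (cs : List A) : List A :=
  (cs.map fun c => List.replicate k a ++ c :: List.replicate k a ++ [b]).flatten

@[simp]
theorem blockWord_nil : blockWord k a b [] = [] := rfl

theorem blockWord_cons (c : A) (cs : List A) :
    blockWord k a b (c :: cs) =
      (List.replicate k a ++ c :: List.replicate k a ++ [b]) ++ blockWord k a b cs := by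
  simp [blockWord]

theorem blockWord_append (cs₁ cs₂ : List A) :
    blockWord k a b (cs₁ ++ cs₂) = blockWord k a b cs₁ ++ blockWord k a b cs₂ := by
  simp [blockWord]

@[simp]
theorem length_blockWord (cs : List A) : (blockWord k a b cs).length = cs.length * (2 * k + 2) := by
  induction cs with
  | nil => simp
  | cons c cs ih => simp [blockWord_cons, ih]; ring

theorem getElem?_blockWord (cs : List A) (i : ℕ) :
    (blockWord k a b cs)[i]? =
      if i < cs.length * (2 * k + 2) then
        some (if i % (2 * k + 2) = k then cs.getD (i / (2 * k + 2)) a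
          else if i % (2 * k + 2) = 2 * k + 1 then b else a)
      else none := by
  induction cs generalizing i with
  | nil => simp
  | cons c cs ih =>
    rw [blockWord_cons]
    have hN : (List.replicate k a ++ c :: List.replicate k a ++ [b]).length = 2 * k + 2 := by
      simp; omega
    rcases lt_or_ge i (2 * k + 2) with hi | hi
    · rw [List.getElem?_append_left (hN ▸ hi), Nat.mod_eq_of_lt hi, Nat.div_eq_of_lt hi,
        if_pos (hi.trans_le (by simp))]
      simp [List.getElem?_append, List.getElem?_cons, List.getElem?_replicate]
      split_ifs <;> simp_all <;> omega
    · obtain ⟨j, rfl⟩ := Nat.exists_eq_add_of_le' hi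
      have hj : j + (2 * k + 2) < (cs.length + 1) * (2 * k + 2) ↔ j < cs.length * (2 * k + 2) := by
        rw [add_one_mul]; omega
      rw [List.getElem?_append_right (hN ▸ hi), hN, Nat.add_sub_cancel, ih, Nat.add_mod_right,
        Nat.add_div_right _ (by omega), List.length_cons]
      simp only [hj, List.getD_cons_succ]

theorem blockWord_cons_eq_st (w : List A) :
    blockWord k a b (a :: w) =
      List.replicate (k + 1) a ++ st w (List.replicate k a ++ [b] ++ List.replicate k a) ++
        (List.replicate k a ++ [b]) := by
  have hrot : ∀ w : List A, List.replicate k a ++ b :: blockWord k a b w =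
      st w (List.replicate k a ++ [b] ++ List.replicate k a) ++ (List.replicate k a ++ [b]) := by
    intro w
    induction w with
    | nil => simp [st]
    | cons c w ih =>
      rw [st_cons, List.append_assoc, List.cons_append, ← ih, blockWord_cons]
      simp
  rw [List.append_assoc, ← hrot, blockWord_cons]
  simp [List.replicate_succ']

end BlockWord

section Core

variable {A : Type*} {k : ℕ} {a b : A}

theorem count_blockWord [DecidableEq A] (hab : a ≠ b) (cs : List A) :
    (blockWord k a b cs).count a = cs.length * (2 * k) + cs.count a := by
  induction cs with
  | nil => simp
  | cons c cs ih =>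
    simp [blockWord_cons, List.count_cons, ih, Ne.symm hab]
    ring

theorem getElem?_blockWord_eq_some_of_ne {cs : List A} {i : ℕ} {x : A}
    (h : (blockWord k a b cs)[i]? = some x) (hx : x ≠ a) :
    (i % (2 * k + 2) = k ∧ cs[i / (2 * k + 2)]? = some x) ∨
      (i % (2 * k + 2) = 2 * k + 1 ∧ x = b) := by
  rw [getElem?_blockWord] at h
  split_ifs at h with _ hk hsep <;> simp only [Option.some.injEq] at h
  · refine .inl ⟨hk, ?_⟩
    rw [List.getD_eq_getElem?_getD] at h
    cases hc : cs[i / (2 * k + 2)]? <;> simp_all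
  · exact .inr ⟨hsep, h.symm⟩
  · exact absurd h.symm hx

theorem mod_succ_eq_of_getElem?_blockWord_eq_some {cs : List A} {i : ℕ} {x : A}
    (h : (blockWord k a b cs)[i]? = some x) (hx : x ≠ a) : i % (k + 1) = k := by
  rw [← Nat.mod_mod_of_dvd i (⟨2, by ring⟩ : k + 1 ∣ 2 * k + 2)]
  rcases getElem?_blockWord_eq_some_of_ne h hx with ⟨h, -⟩ | ⟨h, -⟩ <;> rw [h]
  · exact Nat.mod_eq_of_lt k.lt_succ_self
  · rw [show 2 * k + 1 = k + (k + 1) by ring, Nat.add_mod_right, Nat.mod_eq_of_lt k.lt_succ_self]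

theorem IsMatching.blockWord_cases {cs cs' : List A} {P : List (ℕ × ℕ)}
    (hP : IsMatching (blockWord k a b cs) (blockWord k a b cs') P)
    (hshift : ∀ p ∈ P, p.1 < p.2 + k ∧ p.2 < p.1 + k) {p : ℕ × ℕ} (hp : p ∈ P) :
    ((blockWord k a b cs)[p.1]? = some a ∧ (blockWord k a b cs')[p.2]? = some a) ∨
      p.1 = p.2 ∧ ((p.1 % (2 * k + 2) = k ∧ ∃ x, x ≠ a ∧ cs[p.1 / (2 * k + 2)]? = some x ∧
        cs'[p.1 / (2 * k + 2)]? = some x) ∨ p.1 % (2 * k + 2) = 2 * k + 1) := by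
  obtain ⟨x, hx, hx'⟩ := hP.2 p hp
  rcases eq_or_ne x a with rfl | hxa
  · exact .inl ⟨hx, hx'⟩
  have heq : p.1 = p.2 := Nat.ModEq.eq_of_abs_lt
    ((mod_succ_eq_of_getElem?_blockWord_eq_some hx hxa).trans
      (mod_succ_eq_of_getElem?_blockWord_eq_some hx' hxa).symm)
    (by have := hshift p hp; rw [abs_sub_lt_iff]; omega)
  refine .inr ⟨heq, ?_⟩
  rw [← heq] at hx'
  rcases getElem?_blockWord_eq_some_of_ne hx hxa with ⟨hk, hc⟩ | ⟨hsep, -⟩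
  · rcases getElem?_blockWord_eq_some_of_ne hx' hxa with ⟨-, hc'⟩ | ⟨hsep', -⟩
    · exact .inl ⟨hk, x, hxa, hc, hc'⟩
    · omega
  · exact .inr hsep

variable [DecidableEq A]

theorem length_add_hammingDistL_le_of_no_inner_separator_pair (hab : a ≠ b) {cs cs' : List A}
    (hlen : cs.length = cs'.length) (hcs : cs ≠ []) {P : List (ℕ × ℕ)}
    (hP : IsMatching (blockWord k a b cs) (blockWord k a b cs') P)
    (hshift : ∀ p ∈ P, p.1 < p.2 + k ∧ p.2 < p.1 + k)
    (hsep : ∀ p ∈ P, p.1 = p.2 → p.1 % (2 * k + 2) = 2 * k + 1 →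
      cs.length * (2 * k + 2) ≤ p.1 + 1) :
    P.length + hammingDistL cs cs' ≤ cs.length * (2 * k + 2) := by
  set Pa := P.filter fun p => (blockWord k a b cs)[p.1]? = some a
  set Pn := P.filter fun p => !decide ((blockWord k a b cs)[p.1]? = some a)
  set Pl := Pn.filter fun p => p.1 % (2 * k + 2) = k
  set Pf := Pn.filter fun p => !decide (p.1 % (2 * k + 2) = k)
  have hPn : ∀ p ∈ Pn, p.1 = p.2 ∧ ((p.1 % (2 * k + 2) = k ∧ ∃ x, x ≠ a ∧
      cs[p.1 / (2 * k + 2)]? = some x ∧ cs'[p.1 / (2 * k + 2)]? = some x) ∨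
      p.1 % (2 * k + 2) = 2 * k + 1) := by
    intro p hp
    simp only [Pn, List.mem_filter, Bool.not_eq_true', decide_eq_false_iff_not] at hp
    exact (hP.blockWord_cases hshift hp.1).resolve_left fun h => hp.2 h.1
  have hPa : Pa.length ≤ (blockWord k a b cs).count a := by
    rw [← List.length_map (f := Prod.fst)]
    refine List.Nodup.length_le_countP (hP.nodup_map_fst.sublist (List.filter_sublist.map _)) ?_
    simp only [List.mem_map, List.mem_filter, decide_eq_true_eq]
    rintro _ ⟨p, ⟨-, hp⟩, rfl⟩
    exact ⟨a, hp, by simp⟩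
  have hPa' : Pa.length ≤ (blockWord k a b cs').count a := by
    rw [← List.length_map (f := Prod.snd)]
    refine List.Nodup.length_le_countP (hP.nodup_map_snd.sublist (List.filter_sublist.map _)) ?_
    simp only [List.mem_map, List.mem_filter, decide_eq_true_eq]
    rintro _ ⟨p, ⟨hp, hpa⟩, rfl⟩
    obtain ⟨x, hx, hx'⟩ := hP.2 p hp
    obtain rfl : x = a := Option.some_injective _ (hx.symm.trans hpa)
    exact ⟨x, hx', by simp⟩
  have hPl : Pl.length ≤ (cs.zip cs').countP fun q => q.1 = q.2 ∧ q.1 ≠ a := by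
    have hsub : Pl.Sublist P := List.filter_sublist.trans List.filter_sublist
    rw [← List.length_map (f := Prod.fst), ← List.length_map (f := (· / (2 * k + 2)))]
    refine List.Nodup.length_le_countP ((hP.nodup_map_fst.sublist (hsub.map _)).map_on ?_) ?_
    · simp only [List.mem_map, Pl, List.mem_filter, decide_eq_true_eq]
      rintro _ ⟨p, ⟨-, hp⟩, rfl⟩ _ ⟨q, ⟨-, hq⟩, rfl⟩ hpq
      rw [← Nat.div_add_mod p.1 (2 * k + 2), ← Nat.div_add_mod q.1 (2 * k + 2), hpq, hp, hq]
    · simp only [List.mem_map, Pl, List.mem_filter, decide_eq_true_eq]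
      rintro _ ⟨_, ⟨p, ⟨hp, hpk⟩, rfl⟩, rfl⟩
      obtain ⟨-, ⟨-, x, hxa, hx, hx'⟩ | hb⟩ := hPn p hp
      · exact ⟨(x, x), List.getElem?_zip_eq_some.mpr ⟨hx, hx'⟩, by simpa using hxa⟩
      · omega
  have hPf : Pf.length ≤ 1 := by
    rw [← List.length_map (f := Prod.fst)]
    refine (List.Nodup.length_le_sub (lo := cs.length * (2 * k + 2) - 1)
      (hi := cs.length * (2 * k + 2))
      (hP.nodup_map_fst.sublist ((List.filter_sublist.trans List.filter_sublist).map _)) ?_).trans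
      (by omega)
    simp only [List.mem_map]
    rintro _ ⟨p, hp, rfl⟩
    obtain ⟨hpn, hpk⟩ := List.mem_filter.mp hp
    obtain ⟨heq, ⟨hk, -⟩ | hb⟩ := hPn p hpn
    · simp [hk] at hpk
    have hpP := (List.mem_filter.mp hpn).1
    have := hsep p hpP heq hb
    have := hP.fst_lt_length hpP
    simp only [length_blockWord] at this
    omega
  have hlenP : P.length = Pa.length + Pn.length := List.length_eq_length_filter_add _
  have hlenPn : Pn.length = Pl.length + Pf.length := List.length_eq_length_filter_add _
  have hcount := countP_zip_add_hammingDistL_add_min_count_le a hlen hcs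
  rw [count_blockWord hab] at hPa
  rw [count_blockWord hab, ← hlen] at hPa'
  have : cs.length * (2 * k + 2) = cs.length * (2 * k) + 2 * cs.length := by ring
  omega

theorem length_add_hammingDistL_le_of_isMatching (hab : a ≠ b) {cs cs' : List A}
    (hlen : cs.length = cs'.length) {P : List (ℕ × ℕ)}
    (hP : IsMatching (blockWord k a b cs) (blockWord k a b cs') P)
    (hshift : ∀ p ∈ P, p.1 < p.2 + k ∧ p.2 < p.1 + k) :
    P.length + hammingDistL cs cs' ≤ cs.length * (2 * k + 2) := by
  induction hg : cs.length using Nat.strong_induction_on generalizing cs cs' P with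
  | _ g ih =>
  subst hg
  rcases eq_or_ne cs [] with rfl | hcs
  · obtain rfl : cs' = [] := List.length_eq_zero_iff.mp hlen.symm
    obtain _ | ⟨p, P⟩ := P
    · simp [hammingDistL]
    · obtain ⟨x, hx, -⟩ := hP.2 p List.mem_cons_self
      simp at hx
  by_cases hsep : ∀ p ∈ P, p.1 = p.2 → p.1 % (2 * k + 2) = 2 * k + 1 →
      cs.length * (2 * k + 2) ≤ p.1 + 1
  · exact length_add_hammingDistL_le_of_no_inner_separator_pair hab hlen hcs hP hshift hsep
  -- A pair `(i, i)` on an inner separator cuts everything into two shorter instances.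
  push Not at hsep
  obtain ⟨p, hp, heq, hb, hlt⟩ := hsep
  set n := p.1 / (2 * k + 2) + 1
  have hpn : p.1 + 1 = n * (2 * k + 2) := by
    have := Nat.div_add_mod' p.1 (2 * k + 2)
    rw [add_one_mul]; omega
  have hn : n < cs.length := Nat.lt_of_mul_lt_mul_right (a := 2 * k + 2) (by omega)
  rw [← List.take_append_drop n cs, ← List.take_append_drop n cs', blockWord_append,
    blockWord_append] at hP
  have hl₁ : (blockWord k a b (cs.take n)).length = p.1 + 1 := by
    simp [hpn, hn.le]
  have hl₁' : (blockWord k a b (cs'.take n)).length = p.1 + 1 := by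
    simp [hpn, ← hlen, hn.le]
  have hcutP : ∀ q ∈ P, q.1 < (blockWord k a b (cs.take n)).length ↔
      q.2 < (blockWord k a b (cs'.take n)).length := by
    intro q hq
    have := hP.fst_lt_iff_snd_lt hp hq
    rw [hl₁, hl₁']
    omega
  obtain ⟨hP₁, hP₂⟩ := hP.split hcutP
  have h₁ := ih n hn (by simp [hn.le, ← hlen]) hP₁
    (fun q hq => hshift q (List.mem_filter.mp hq).1) (by simp [hn.le])
  have h₂ := ih (cs.length - n) (Nat.sub_lt (List.length_pos_iff.mpr hcs) (Nat.succ_pos _))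
    (by simp [hlen]) hP₂ ?_ (by simp)
  · rw [List.length_map] at h₂
    simp only [decide_not] at h₂
    have hsplit := List.length_eq_length_filter_add (l := P)
      (fun q => decide (q.1 < (blockWord k a b (cs.take n)).length))
    rw [← List.take_append_drop n cs, ← List.take_append_drop n cs',
      hammingDistL_append (by simp [hlen]), List.length_append]
    simp only [List.length_take, List.length_drop, min_eq_left hn.le] at h₁ h₂ ⊢
    rw [add_mul]
    omega
  · simp only [List.mem_map, List.mem_filter, decide_eq_true_eq]
    rintro _ ⟨q, ⟨hq, hqc⟩, rfl⟩
    have := hshift q hq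
    have := (hcutP q hq).not.mp hqc
    simp only [hl₁, hl₁'] at hqc this ⊢
    omega

end Core

theorem length_add_hammingDistL_le_of_sublist_st {A : Type*} [DecidableEq A] {a b : A}
    (hab : a ≠ b) {w₁ w₂ : List A} (hlen : w₁.length = w₂.length) {k : ℕ}
    (hk : hammingDistL w₁ w₂ < k) {m : List A}
    (h₁ : m.Sublist (st w₁ (List.replicate k a ++ [b] ++ List.replicate k a)))
    (h₂ : m.Sublist (st w₂ (List.replicate k a ++ [b] ++ List.replicate k a))) :
    m.length + hammingDistL w₁ w₂ ≤
      (st w₁ (List.replicate k a ++ [b] ++ List.replicate k a)).length := by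
  have hst : (st w₁ (List.replicate k a ++ [b] ++ List.replicate k a)).length =
      w₁.length * (2 * k + 2) := by
    rw [length_st]; simp only [List.length_append, List.length_replicate, List.length_singleton]
    ring
  rw [hst]
  by_contra! hlt
  obtain ⟨P, hP, hPlen⟩ := List.Sublist.exists_isMatching
    (u := blockWord k a b (a :: w₁)) (v := blockWord k a b (a :: w₂))
    (m := List.replicate (k + 1) a ++ m ++ (List.replicate k a ++ [b]))
    (by rw [blockWord_cons_eq_st]; exact (h₁.append_left _).append_right _)
    (by rw [blockWord_cons_eq_st]; exact (h₂.append_left _).append_right _)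
  simp only [List.length_append, List.length_replicate, List.length_singleton] at hPlen
  have hshift : ∀ p ∈ P, p.1 < p.2 + k ∧ p.2 < p.1 + k := fun p hp => by
    have := hP.fst_le_snd_add hp
    have := hP.snd_le_fst_add hp
    simp only [length_blockWord, List.length_cons, add_one_mul, ← hlen] at *
    omega
  have := length_add_hammingDistL_le_of_isMatching hab (by simp [hlen]) hP hshift
  rw [hammingDistL_cons, if_pos rfl, List.length_cons, add_one_mul] at this
  omega

theorem stmt_7_general {A : Type*} [DecidableEq A] (w₁ w₂ : List A)
    (hlen : w₁.length = w₂.length) (k : ℕ) (hk : hammingDistL w₁ w₂ < k)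
    (a b : A) (hab : a ≠ b) (θ : ℝ) (hθ : θ ∈ Set.Ioc (0 : ℝ) 2) :
    lev 1 θ (st w₁ (List.replicate k a ++ [b] ++ List.replicate k a))
        (st w₂ (List.replicate k a ++ [b] ++ List.replicate k a))
      = θ * hammingDistL w₁ w₂ := by
  obtain ⟨hθ₀, hθ₂⟩ := hθ
  set B := List.replicate k a ++ [b] ++ List.replicate k a
  have hl : (st w₂ B).length = (st w₁ B).length := by rw [length_st, length_st, hlen]
  refine le_antisymm ?_ ?_
  · rw [← hammingDistL_st hlen B]
    exact lev_le_mul_hammingDistL 1 θ hl.symm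
  · obtain ⟨m, h₁, h₂, hm⟩ := exists_sublist_mul_le_lev 1 θ (by linarith) (st w₁ B) (st w₂ B)
    have : (m.length : ℝ) + hammingDistL w₁ w₂ ≤ (st w₁ B).length := by
      exact_mod_cast length_add_hammingDistL_le_of_sublist_st hab hlen hk h₁ h₂
    rw [hl] at hm
    nlinarith

/-- For words `w₁, w₂` of equal length, `k > h(w₁, w₂)`, distinct letters
`a ≠ b`, and `θ ∈ (0, 2]`,
`lev_θ(st(w₁, aᵏbaᵏ), st(w₂, aᵏbaᵏ)) = θ · h(w₁, w₂)`. -/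
theorem stmt_7 {A : Type*} [Fintype A] [DecidableEq A] (w₁ w₂ : List A)
    (hlen : w₁.length = w₂.length) (k : ℕ) (hk : hammingDistL w₁ w₂ < k)
    (a b : A) (hab : a ≠ b) (θ : ℝ) (hθ : θ ∈ Set.Ioc (0 : ℝ) 2) :
    lev 1 θ (st w₁ (List.replicate k a ++ [b] ++ List.replicate k a))
        (st w₂ (List.replicate k a ++ [b] ++ List.replicate k a))
      = θ * hammingDistL w₁ w₂ :=
  stmt_7_general w₁ w₂ hlen k hk a b hab θ hθ
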